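/- arXiv:1903.06467 — 8 statements merged into one kernel-verified Lean document; each statement's English description precedes it below -/
import Mathlib

section
/- Every normed space X over 𝕜 has a hyperdual: there exist a normed space X̃ and linear isometries i_{2k} : D^{2k}(X) → X̃ (k ≥ 0) with i_{2k+2} ∘ j_{D^{2k}(X)} = i_{2k} for all k, such that for every normed space Y and every family of continuous linear maps f_{2k} : D^{2k}(X) → Y with ‖f_{2k}‖ ≤ 1 and f_{2k+2} ∘ j_{D^{2k}(X)} = f_{2k} for all k, there is a unique continuous linear map f : X̃ → Y satisfying f ∘ i_{2k} = f_{2k} for all k, and this f has ‖f‖ ≤ 1; moreover every element of X̃ lies in the range of some i_{2k}. -/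
/-!
STATEMENT 0: Every normed space `X` over `𝕜` has a hyperdual: there exist a normed space `X̃`
and linear isometries `i_{2k} : D^{2k}(X) → X̃` with `i_{2k+2} ∘ j_{D^{2k}(X)} = i_{2k}`,
having the norm-≤-1 universal factorization property, and covering `X̃`.
-/

open NormedSpace

universe u

structure NSpace (𝕜 : Type u) [NontriviallyNormedField 𝕜] where
  carrier : Type u
  [grp : NormedAddCommGroup carrier]
  [mod : NormedSpace 𝕜 carrier]

attribute [instance] NSpace.grp NSpace.mod

variable (𝕜 : Type u) [RCLike 𝕜]

/-- The even iterated duals: `evenDual 𝕜 B k` is `D^{2k}` of `B`. -/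
noncomputable def evenDual (B : NSpace 𝕜) : ℕ → NSpace 𝕜
  | 0 => B
  | k + 1 => ⟨StrongDual 𝕜 (StrongDual 𝕜 (evenDual B k).carrier)⟩

/-- The canonical embedding `j : D^{2k}(X) → D^{2k+2}(X)`. -/
noncomputable def jmap (B : NSpace 𝕜) (k : ℕ) :
    (evenDual 𝕜 B k).carrier →L[𝕜] (evenDual 𝕜 B (k + 1)).carrier :=
  inclusionInDoubleDual 𝕜 (evenDual 𝕜 B k).carrier

/-- `Xt` together with the isometries `i k : D^{2k}(X) → Xt` is a hyperdual of `X`. -/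
def IsHyperdual (X : Type u) [NormedAddCommGroup X] [NormedSpace 𝕜 X]
    (Xt : Type u) [NormedAddCommGroup Xt] [NormedSpace 𝕜 Xt]
    (i : ∀ k : ℕ, (evenDual 𝕜 ⟨X⟩ k).carrier →L[𝕜] Xt) : Prop :=
  (∀ k, Isometry (i k)) ∧
  (∀ k x, i (k + 1) (jmap 𝕜 ⟨X⟩ k x) = i k x) ∧
  (∀ (Y : Type u) [NormedAddCommGroup Y] [NormedSpace 𝕜 Y]
      (f : ∀ k : ℕ, (evenDual 𝕜 ⟨X⟩ k).carrier →L[𝕜] Y),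
      (∀ k, ‖f k‖ ≤ 1) →
      (∀ k x, f (k + 1) (jmap 𝕜 ⟨X⟩ k x) = f k x) →
      (∃! F : Xt →L[𝕜] Y, ∀ k x, F (i k x) = f k x) ∧
        ∀ F : Xt →L[𝕜] Y, (∀ k x, F (i k x) = f k x) → ‖F‖ ≤ 1)

namespace HyperLim

variable (B : NSpace 𝕜)

abbrev Ck (k : ℕ) : Type u := (evenDual 𝕜 B k).carrier

noncomputable def pushToL : ∀ {k m : ℕ}, k ≤ m → (Ck 𝕜 B k →L[𝕜] Ck 𝕜 B m) :=
  fun {k m} h =>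
    Nat.leRecOn h (fun {n} f => (jmap 𝕜 B n).comp f) (ContinuousLinearMap.id 𝕜 _)

theorem pushToL_refl {k : ℕ} {h : k ≤ k} : pushToL 𝕜 B h = ContinuousLinearMap.id 𝕜 _ :=
  Nat.leRecOn_self _

theorem pushToL_succ {k m : ℕ} (h : k ≤ m) {h2 : k ≤ m + 1} :
    pushToL 𝕜 B h2 = (jmap 𝕜 B m).comp (pushToL 𝕜 B h) :=
  Nat.leRecOn_succ h _

theorem pushToL_comp {k m n : ℕ} (h1 : k ≤ m) (h2 : m ≤ n) :
    (pushToL 𝕜 B h2).comp (pushToL 𝕜 B h1) = pushToL 𝕜 B (h1.trans h2) := by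
  induction n, h2 using Nat.le_induction with
  | base => rw [pushToL_refl, ContinuousLinearMap.id_comp]
  | succ n hn ih =>
      rw [pushToL_succ 𝕜 B hn, pushToL_succ 𝕜 B (h1.trans hn),
        ContinuousLinearMap.comp_assoc, ih]

theorem pushTo_pushTo {k m n : ℕ} (h1 : k ≤ m) (h2 : m ≤ n) {h3 : k ≤ n} (x : Ck 𝕜 B k) :
    pushToL 𝕜 B h2 (pushToL 𝕜 B h1 x) = pushToL 𝕜 B h3 x :=
  DFunLike.congr_fun (pushToL_comp 𝕜 B h1 h2) x

theorem norm_pushTo {k m : ℕ} (h : k ≤ m) (x : Ck 𝕜 B k) :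
    ‖pushToL 𝕜 B h x‖ = ‖x‖ := by
  induction m, h using Nat.le_induction with
  | base => rw [pushToL_refl]; rfl
  | succ n hn ih =>
      rw [pushToL_succ 𝕜 B hn, ContinuousLinearMap.comp_apply]
      exact ((inclusionInDoubleDualLi 𝕜 (E := Ck 𝕜 B n)).norm_map _).trans ih

theorem pushTo_inj {k m : ℕ} (h : k ≤ m) {x y : Ck 𝕜 B k}
    (hxy : pushToL 𝕜 B h x = pushToL 𝕜 B h y) : x = y := by
  have h0 : ‖x - y‖ = 0 := by
    rw [← norm_pushTo 𝕜 B h, map_sub, hxy, sub_self, norm_zero]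
  exact sub_eq_zero.mp (norm_eq_zero.mp h0)

def rel (p q : Σ k, Ck 𝕜 B k) : Prop :=
  ∃ m, ∃ h1 : p.1 ≤ m, ∃ h2 : q.1 ≤ m, pushToL 𝕜 B h1 p.2 = pushToL 𝕜 B h2 q.2

theorem rel_equiv : Equivalence (rel 𝕜 B) where
  refl p := ⟨p.1, le_rfl, le_rfl, rfl⟩
  symm := fun ⟨m, h1, h2, h⟩ => ⟨m, h2, h1, h.symm⟩
  trans := by
    rintro p q r ⟨m, h1, h2, h⟩ ⟨m', h1', h2', h'⟩
    refine ⟨max m m', h1.trans (le_max_left m m'), h2'.trans (le_max_right m m'), ?_⟩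
    rw [← pushTo_pushTo 𝕜 B h1 (le_max_left m m'), h,
      ← pushTo_pushTo 𝕜 B h2' (le_max_right m m'), ← h',
      pushTo_pushTo 𝕜 B h2 (le_max_left m m') (h3 := h2.trans (le_max_left m m')),
      pushTo_pushTo 𝕜 B h1' (le_max_right m m') (h3 := h2.trans (le_max_left m m'))]

instance sd : Setoid (Σ k, Ck 𝕜 B k) := ⟨rel 𝕜 B, rel_equiv 𝕜 B⟩

def Lim : Type u := Quotient (sd 𝕜 B)

def emb (k : ℕ) (x : Ck 𝕜 B k) : Lim 𝕜 B := Quotient.mk _ ⟨k, x⟩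

theorem emb_push {k m : ℕ} (h : k ≤ m) (x : Ck 𝕜 B k) :
    emb 𝕜 B m (pushToL 𝕜 B h x) = emb 𝕜 B k x :=
  Quotient.sound ⟨m, le_rfl, h, by rw [pushToL_refl]; rfl⟩

theorem exists_rep (v : Lim 𝕜 B) : ∃ k x, emb 𝕜 B k x = v := by
  obtain ⟨⟨k, x⟩, rfl⟩ := Quotient.exists_rep v
  exact ⟨k, x, rfl⟩

theorem exists_rep₂ (v w : Lim 𝕜 B) : ∃ k x y, emb 𝕜 B k x = v ∧ emb 𝕜 B k y = w := by
  obtain ⟨k, x, rfl⟩ := exists_rep 𝕜 B v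
  obtain ⟨l, y, rfl⟩ := exists_rep 𝕜 B w
  exact ⟨max k l, pushToL 𝕜 B (le_max_left k l) x, pushToL 𝕜 B (le_max_right k l) y,
    emb_push 𝕜 B _ _, emb_push 𝕜 B _ _⟩

theorem exists_rep₃ (v w u : Lim 𝕜 B) :
    ∃ k x y z, emb 𝕜 B k x = v ∧ emb 𝕜 B k y = w ∧ emb 𝕜 B k z = u := by
  obtain ⟨k, x, y, rfl, rfl⟩ := exists_rep₂ 𝕜 B v w
  obtain ⟨l, z, rfl⟩ := exists_rep 𝕜 B u
  exact ⟨max k l, pushToL 𝕜 B (le_max_left k l) x, pushToL 𝕜 B (le_max_left k l) y,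
    pushToL 𝕜 B (le_max_right k l) z,
    emb_push 𝕜 B _ _, emb_push 𝕜 B _ _, emb_push 𝕜 B _ _⟩

theorem pushTo_congr {k l m M : ℕ} (h1 : k ≤ m) (h2 : l ≤ m) (hM : m ≤ M)
    {hk : k ≤ M} {hl : l ≤ M} {x : Ck 𝕜 B k} {y : Ck 𝕜 B l}
    (h : pushToL 𝕜 B h1 x = pushToL 𝕜 B h2 y) :
    pushToL 𝕜 B hk x = pushToL 𝕜 B hl y := by
  rw [← pushTo_pushTo 𝕜 B h1 hM, h, pushTo_pushTo 𝕜 B h2 hM]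

noncomputable def add' : Lim 𝕜 B → Lim 𝕜 B → Lim 𝕜 B :=
  Quotient.map₂
    (fun p q => ⟨max p.1 q.1,
      pushToL 𝕜 B (le_max_left p.1 q.1) p.2 + pushToL 𝕜 B (le_max_right p.1 q.1) q.2⟩)
    (by
      rintro ⟨k1, x1⟩ ⟨k2, x2⟩ ⟨m, a1, a2, hm⟩ ⟨l1, y1⟩ ⟨l2, y2⟩ ⟨n, b1, b2, hn⟩
      refine ⟨max m n,
        max_le (a1.trans (le_max_left m n)) (b1.trans (le_max_right m n)),
        max_le (a2.trans (le_max_left m n)) (b2.trans (le_max_right m n)), ?_⟩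
      rw [map_add, map_add,
        pushTo_pushTo 𝕜 B (le_max_left k1 l1) (h3 := a1.trans (le_max_left m n)),
        pushTo_pushTo 𝕜 B (le_max_right k1 l1) (h3 := b1.trans (le_max_right m n)),
        pushTo_pushTo 𝕜 B (le_max_left k2 l2) (h3 := a2.trans (le_max_left m n)),
        pushTo_pushTo 𝕜 B (le_max_right k2 l2) (h3 := b2.trans (le_max_right m n)),
        pushTo_congr 𝕜 B a1 a2 (le_max_left m n) hm,
        pushTo_congr 𝕜 B b1 b2 (le_max_right m n) hn])


noncomputable def neg' : Lim 𝕜 B → Lim 𝕜 B :=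
  Quotient.map (fun p => ⟨p.1, -p.2⟩)
    (by rintro ⟨k, x⟩ ⟨l, y⟩ ⟨m, h1, h2, h⟩
        exact ⟨m, h1, h2, by rw [map_neg, map_neg, h]⟩)

noncomputable def smul' (c : 𝕜) : Lim 𝕜 B → Lim 𝕜 B :=
  Quotient.map (fun p => ⟨p.1, c • p.2⟩)
    (by rintro ⟨k, x⟩ ⟨l, y⟩ ⟨m, h1, h2, h⟩
        exact ⟨m, h1, h2, by rw [map_smul, map_smul, h]⟩)

noncomputable def zero' : Lim 𝕜 B := emb 𝕜 B 0 0

theorem emb_add' (k : ℕ) (x y : Ck 𝕜 B k) :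
    add' 𝕜 B (emb 𝕜 B k x) (emb 𝕜 B k y) = emb 𝕜 B k (x + y) := by
  refine Quotient.sound ⟨max k k, le_rfl, le_max_left k k, ?_⟩
  rw [pushToL_refl]
  simp only [ContinuousLinearMap.id_apply, map_add]

theorem emb_neg' (k : ℕ) (x : Ck 𝕜 B k) :
    neg' 𝕜 B (emb 𝕜 B k x) = emb 𝕜 B k (-x) := rfl

theorem emb_smul' (c : 𝕜) (k : ℕ) (x : Ck 𝕜 B k) :
    smul' 𝕜 B c (emb 𝕜 B k x) = emb 𝕜 B k (c • x) := rfl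

theorem emb_zero' (k : ℕ) : emb 𝕜 B k 0 = zero' 𝕜 B :=
  Quotient.sound ⟨k, le_rfl, Nat.zero_le k, by rw [map_zero, map_zero]⟩

noncomputable instance : Zero (Lim 𝕜 B) := ⟨zero' 𝕜 B⟩
noncomputable instance : Add (Lim 𝕜 B) := ⟨add' 𝕜 B⟩
noncomputable instance : Neg (Lim 𝕜 B) := ⟨neg' 𝕜 B⟩
noncomputable instance : SMul 𝕜 (Lim 𝕜 B) := ⟨smul' 𝕜 B⟩

noncomputable instance : AddCommGroup (Lim 𝕜 B) where
  add := (· + ·)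
  zero := 0
  neg := Neg.neg
  nsmul := nsmulRec
  zsmul := zsmulRec
  add_assoc a b c := by
    show add' 𝕜 B (add' 𝕜 B a b) c = add' 𝕜 B a (add' 𝕜 B b c)
    obtain ⟨k, x, y, z, rfl, rfl, rfl⟩ := exists_rep₃ 𝕜 B a b c
    rw [emb_add', emb_add', emb_add', emb_add', add_assoc]
  zero_add a := by
    show add' 𝕜 B (zero' 𝕜 B) a = a
    obtain ⟨k, x, rfl⟩ := exists_rep 𝕜 B a
    rw [← emb_zero' 𝕜 B k, emb_add', zero_add]
  add_zero a := by
    show add' 𝕜 B a (zero' 𝕜 B) = a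
    obtain ⟨k, x, rfl⟩ := exists_rep 𝕜 B a
    rw [← emb_zero' 𝕜 B k, emb_add', add_zero]
  neg_add_cancel a := by
    show add' 𝕜 B (neg' 𝕜 B a) a = zero' 𝕜 B
    obtain ⟨k, x, rfl⟩ := exists_rep 𝕜 B a
    rw [emb_neg', emb_add', neg_add_cancel, emb_zero']
  add_comm a b := by
    show add' 𝕜 B a b = add' 𝕜 B b a
    obtain ⟨k, x, y, rfl, rfl⟩ := exists_rep₂ 𝕜 B a b
    rw [emb_add', emb_add', add_comm]

noncomputable instance : Module 𝕜 (Lim 𝕜 B) where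
  smul := smul' 𝕜 B
  one_smul a := by
    show smul' 𝕜 B 1 a = a
    obtain ⟨k, x, rfl⟩ := exists_rep 𝕜 B a
    rw [emb_smul', one_smul]
  mul_smul c d a := by
    show smul' 𝕜 B (c * d) a = smul' 𝕜 B c (smul' 𝕜 B d a)
    obtain ⟨k, x, rfl⟩ := exists_rep 𝕜 B a
    rw [emb_smul', emb_smul', emb_smul', mul_smul]
  smul_zero c := by
    show smul' 𝕜 B c (zero' 𝕜 B) = zero' 𝕜 B
    rw [← emb_zero' 𝕜 B 0, emb_smul', smul_zero]
  smul_add c a b := by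
    show smul' 𝕜 B c (add' 𝕜 B a b) = add' 𝕜 B (smul' 𝕜 B c a) (smul' 𝕜 B c b)
    obtain ⟨k, x, y, rfl, rfl⟩ := exists_rep₂ 𝕜 B a b
    rw [emb_add', emb_smul', emb_smul', emb_smul', emb_add', smul_add]
  add_smul c d a := by
    show smul' 𝕜 B (c + d) a = add' 𝕜 B (smul' 𝕜 B c a) (smul' 𝕜 B d a)
    obtain ⟨k, x, rfl⟩ := exists_rep 𝕜 B a
    rw [emb_smul', emb_smul', emb_smul', emb_add', add_smul]
  zero_smul a := by
    show smul' 𝕜 B 0 a = zero' 𝕜 B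
    obtain ⟨k, x, rfl⟩ := exists_rep 𝕜 B a
    rw [emb_smul', zero_smul, emb_zero']

noncomputable def gnorm : AddGroupNorm (Lim 𝕜 B) where
  toFun := Quotient.lift (fun p => ‖p.2‖)
    (by rintro ⟨k, x⟩ ⟨l, y⟩ ⟨m, h1, h2, h⟩
        show ‖x‖ = ‖y‖
        rw [← norm_pushTo 𝕜 B h1 x, h, norm_pushTo])
  map_zero' := norm_zero (E := Ck 𝕜 B 0)
  add_le' v w := by
    obtain ⟨k, x, y, rfl, rfl⟩ := exists_rep₂ 𝕜 B v w
    show Quotient.lift _ _ (add' 𝕜 B (emb 𝕜 B k x) (emb 𝕜 B k y)) ≤ ‖x‖ + ‖y‖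
    rw [emb_add']
    exact norm_add_le x y
  neg' v := by
    obtain ⟨k, x, rfl⟩ := exists_rep 𝕜 B v
    show Quotient.lift _ _ (neg' 𝕜 B (emb 𝕜 B k x)) = ‖x‖
    rw [emb_neg']
    exact norm_neg x
  eq_zero_of_map_eq_zero' v h := by
    obtain ⟨k, x, rfl⟩ := exists_rep 𝕜 B v
    have : x = 0 := norm_eq_zero.mp h
    rw [this, emb_zero']
    rfl

noncomputable instance : NormedAddCommGroup (Lim 𝕜 B) :=
  (gnorm 𝕜 B).toNormedAddCommGroup

noncomputable instance : NormedSpace 𝕜 (Lim 𝕜 B) where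
  norm_smul_le c v := by
    obtain ⟨k, x, rfl⟩ := exists_rep 𝕜 B v
    show ‖c • x‖ ≤ ‖c‖ * ‖x‖
    exact (norm_smul c x).le

theorem norm_emb (k : ℕ) (x : Ck 𝕜 B k) : ‖emb 𝕜 B k x‖ = ‖x‖ := rfl

theorem emb_add (k : ℕ) (x y : Ck 𝕜 B k) :
    emb 𝕜 B k x + emb 𝕜 B k y = emb 𝕜 B k (x + y) := emb_add' 𝕜 B k x y

theorem emb_smul (c : 𝕜) (k : ℕ) (x : Ck 𝕜 B k) :
    c • emb 𝕜 B k x = emb 𝕜 B k (c • x) := rfl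

noncomputable def embL (k : ℕ) : Ck 𝕜 B k →L[𝕜] Lim 𝕜 B :=
  LinearMap.mkContinuous
    { toFun := emb 𝕜 B k
      map_add' := fun x y => (emb_add 𝕜 B k x y).symm
      map_smul' := fun c x => (emb_smul 𝕜 B c k x).symm }
    1 (fun x => by show ‖emb 𝕜 B k x‖ ≤ 1 * ‖x‖; rw [norm_emb, one_mul])

theorem embL_apply (k : ℕ) (x : Ck 𝕜 B k) : embL 𝕜 B k x = emb 𝕜 B k x := rfl

theorem isometry_embL (k : ℕ) : Isometry (embL 𝕜 B k) :=
  AddMonoidHomClass.isometry_of_norm _ (fun x => norm_emb 𝕜 B k x)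

theorem jmap_eq_pushTo (k : ℕ) (x : Ck 𝕜 B k) :
    jmap 𝕜 B k x = pushToL 𝕜 B (Nat.le_succ k) x := by
  rw [pushToL_succ 𝕜 B (le_refl k), pushToL_refl]
  rfl

theorem embL_compat (k : ℕ) (x : Ck 𝕜 B k) :
    embL 𝕜 B (k + 1) (jmap 𝕜 B k x) = embL 𝕜 B k x := by
  rw [embL_apply, embL_apply, jmap_eq_pushTo, emb_push]

section Factor

variable {Y : Type u} [NormedAddCommGroup Y] [NormedSpace 𝕜 Y]
variable (f : ∀ k : ℕ, Ck 𝕜 B k →L[𝕜] Y)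

theorem f_push (hcompat : ∀ k x, f (k + 1) (jmap 𝕜 B k x) = f k x)
    {k m : ℕ} (h : k ≤ m) (x : Ck 𝕜 B k) :
    f m (pushToL 𝕜 B h x) = f k x := by
  induction m, h using Nat.le_induction with
  | base => rw [pushToL_refl]; rfl
  | succ n hn ih =>
      rw [pushToL_succ 𝕜 B hn, ContinuousLinearMap.comp_apply, hcompat, ih]

variable (hcompat : ∀ k x, f (k + 1) (jmap 𝕜 B k x) = f k x)

noncomputable def F0 : Lim 𝕜 B → Y :=
  Quotient.lift (fun p => f p.1 p.2)
    (by
      rintro ⟨k, x⟩ ⟨l, y⟩ ⟨m, h1, h2, h⟩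
      show f k x = f l y
      rw [← f_push 𝕜 B f hcompat h1 x, h, f_push 𝕜 B f hcompat])

theorem F0_emb (k : ℕ) (x : Ck 𝕜 B k) : F0 𝕜 B f hcompat (emb 𝕜 B k x) = f k x := rfl

theorem F0_bound (hb : ∀ k, ‖f k‖ ≤ 1) (v : Lim 𝕜 B) :
    ‖F0 𝕜 B f hcompat v‖ ≤ 1 * ‖v‖ := by
  obtain ⟨k, x, rfl⟩ := exists_rep 𝕜 B v
  rw [F0_emb, norm_emb, one_mul]
  calc ‖f k x‖ ≤ ‖f k‖ * ‖x‖ := (f k).le_opNorm x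
    _ ≤ 1 * ‖x‖ := by gcongr; exact hb k
    _ = ‖x‖ := one_mul _

noncomputable def Fmap (hb : ∀ k, ‖f k‖ ≤ 1) : Lim 𝕜 B →L[𝕜] Y :=
  LinearMap.mkContinuous
    { toFun := F0 𝕜 B f hcompat
      map_add' := fun a b => by
        obtain ⟨k, x, y, rfl, rfl⟩ := exists_rep₂ 𝕜 B a b
        rw [emb_add, F0_emb, F0_emb, F0_emb, map_add]
      map_smul' := fun c a => by
        obtain ⟨k, x, rfl⟩ := exists_rep 𝕜 B a
        show F0 𝕜 B f hcompat (c • emb 𝕜 B k x) =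
          (RingHom.id 𝕜) c • F0 𝕜 B f hcompat (emb 𝕜 B k x)
        rw [emb_smul, F0_emb, F0_emb, RingHom.id_apply, map_smul] }
    1 (F0_bound 𝕜 B f hcompat hb)

theorem Fmap_emb (hb : ∀ k, ‖f k‖ ≤ 1) (k : ℕ) (x : Ck 𝕜 B k) :
    Fmap 𝕜 B f hcompat hb (embL 𝕜 B k x) = f k x := rfl

end Factor

end HyperLim

/-- Every normed space has a hyperdual, and the hyperdual is covered by the ranges
of the limit isometries. -/
theorem exists_hyperdual (X : Type u) [NormedAddCommGroup X] [NormedSpace 𝕜 X] :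
    ∃ (Xt : NSpace 𝕜) (i : ∀ k : ℕ, (evenDual 𝕜 ⟨X⟩ k).carrier →L[𝕜] Xt.carrier),
      IsHyperdual 𝕜 X Xt.carrier i ∧ ∀ x : Xt.carrier, ∃ k y, i k y = x := by
  refine ⟨⟨HyperLim.Lim 𝕜 ⟨X⟩⟩, HyperLim.embL 𝕜 ⟨X⟩,
    ⟨HyperLim.isometry_embL 𝕜 ⟨X⟩, HyperLim.embL_compat 𝕜 ⟨X⟩, ?_⟩, ?_⟩
  · intro Y _ _ f hb hc
    constructor
    · refine ⟨HyperLim.Fmap 𝕜 ⟨X⟩ f hc hb,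
        fun k x => HyperLim.Fmap_emb 𝕜 ⟨X⟩ f hc hb k x, ?_⟩
      intro F hF
      apply ContinuousLinearMap.ext
      intro v
      obtain ⟨k, x, rfl⟩ := HyperLim.exists_rep 𝕜 ⟨X⟩ v
      rw [← HyperLim.embL_apply 𝕜 ⟨X⟩ k x, hF, HyperLim.Fmap_emb]
    · intro F hF
      refine F.opNorm_le_bound zero_le_one (fun v => ?_)
      obtain ⟨k, x, rfl⟩ := HyperLim.exists_rep 𝕜 ⟨X⟩ v
      rw [← HyperLim.embL_apply 𝕜 ⟨X⟩ k x, hF, HyperLim.embL_apply, HyperLim.norm_emb]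
      calc ‖f k x‖ ≤ ‖f k‖ * ‖x‖ := (f k).le_opNorm x
        _ ≤ 1 * ‖x‖ := by gcongr; exact hb k
  · intro v
    obtain ⟨k, x, h⟩ := HyperLim.exists_rep 𝕜 ⟨X⟩ v
    exact ⟨k, x, h⟩
end

section
/- Let (X̃, (i_{2k})) be a hyperdual of a normed space X over 𝕜. Then for every k ≥ 1 the isometry i_{2k} : D^{2k}(X) → X̃ is a section in the category of normed spaces and contractive maps: there exists a continuous linear map r : X̃ → D^{2k}(X) with ‖r‖ ≤ 1 and r ∘ i_{2k} = id on D^{2k}(X). -/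
/-!
STATEMENT 2: If `(X̃, (i_{2k}))` is a hyperdual of `X`, then for every `k ≥ 1` the isometry
`i_{2k} : D^{2k}(X) → X̃` is a section in the category of normed spaces and contractive maps:
there is a continuous linear `r : X̃ → D^{2k}(X)` with `‖r‖ ≤ 1` and `r ∘ i_{2k} = id`.
-/

open NormedSpace

universe u

variable (𝕜 : Type u) [RCLike 𝕜]

variable (B : NSpace 𝕜)

/-- transport along equality of indices -/
noncomputable def trC {m n : ℕ} (h : m = n) :
    (evenDual 𝕜 B m).carrier →L[𝕜] (evenDual 𝕜 B n).carrier := by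
  subst h; exact ContinuousLinearMap.id 𝕜 _

lemma trC_norm {m n : ℕ} (h : m = n) (x) : ‖trC 𝕜 B h x‖ = ‖x‖ := by subst h; rfl

lemma trC_rfl {m : ℕ} (h : m = m) (x) : trC 𝕜 B h x = x := rfl

lemma trC_trC {m n p : ℕ} (h : m = n) (h' : n = p) (x) :
    trC 𝕜 B h' (trC 𝕜 B h x) = trC 𝕜 B (h.trans h') x := by subst h; subst h'; rfl

lemma jmap_trC {m n : ℕ} (h : m = n) (h' : m + 1 = n + 1) (x) :
    jmap 𝕜 B n (trC 𝕜 B h x) = trC 𝕜 B h' (jmap 𝕜 B m x) := by subst h; rfl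

/-- iterated j -/
noncomputable def up (m : ℕ) : (n : ℕ) → (evenDual 𝕜 B m).carrier →L[𝕜] (evenDual 𝕜 B (m + n)).carrier
  | 0 => ContinuousLinearMap.id 𝕜 _
  | n + 1 => (jmap 𝕜 B (m + n)).comp (up m n)

lemma up_norm (m n : ℕ) (x) : ‖up 𝕜 B m n x‖ ≤ ‖x‖ := by
  induction n with
  | zero => exact le_rfl
  | succ n ih =>
    calc ‖up 𝕜 B m (n+1) x‖ = ‖jmap 𝕜 B (m+n) (up 𝕜 B m n x)‖ := rfl
    _ ≤ ‖up 𝕜 B m n x‖ := double_dual_bound 𝕜 _ _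
    _ ≤ ‖x‖ := ih

lemma up_succ (m n : ℕ) (h : (m + 1) + n = m + (n + 1)) (x) :
    up 𝕜 B m (n + 1) x = trC 𝕜 B h (up 𝕜 B (m + 1) n (jmap 𝕜 B m x)) := by
  induction n with
  | zero => rfl
  | succ n ih =>
    have h0 : (m + 1) + n = m + (n + 1) := by omega
    calc up 𝕜 B m (n+2) x = jmap 𝕜 B (m+(n+1)) (up 𝕜 B m (n+1) x) := rfl
    _ = jmap 𝕜 B (m+(n+1)) (trC 𝕜 B h0 (up 𝕜 B (m+1) n (jmap 𝕜 B m x))) := by rw [ih h0]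
    _ = trC 𝕜 B h (jmap 𝕜 B ((m+1)+n) (up 𝕜 B (m+1) n (jmap 𝕜 B m x))) :=
        jmap_trC 𝕜 B h0 h _
    _ = trC 𝕜 B h (up 𝕜 B (m+1) (n+1) (jmap 𝕜 B m x)) := rfl

/-- the basic retraction `D^{2q+4} → D^{2q+2}` -/
noncomputable def retr (q : ℕ) :
    (evenDual 𝕜 B (q + 2)).carrier →L[𝕜] (evenDual 𝕜 B (q + 1)).carrier :=
  LinearMap.mkContinuous
    { toFun := fun Φ =>
        (Φ : StrongDual 𝕜 (StrongDual 𝕜 (evenDual 𝕜 B (q + 1)).carrier)).comp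
          (inclusionInDoubleDual 𝕜 (StrongDual 𝕜 (evenDual 𝕜 B q).carrier))
      map_add' := fun _ _ => rfl
      map_smul' := fun _ _ => rfl } 1
    (fun Φ => by
      rw [one_mul]; exact
        (ContinuousLinearMap.opNorm_comp_le _ _).trans
          (by
            calc ‖Φ‖ * ‖(show StrongDual 𝕜 (evenDual 𝕜 B q).carrier →L[𝕜] StrongDual 𝕜 (evenDual 𝕜 B (q + 1)).carrier from
                  inclusionInDoubleDual 𝕜 (StrongDual 𝕜 (evenDual 𝕜 B q).carrier))‖
                ≤ ‖Φ‖ * 1 := by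
                  gcongr; exact inclusionInDoubleDual_norm_le 𝕜 _
              _ = ‖Φ‖ := mul_one _))

lemma retr_norm (q : ℕ) (x) : ‖retr 𝕜 B q x‖ ≤ ‖x‖ := by
  simpa using ContinuousLinearMap.le_of_opNorm_le (retr 𝕜 B q)
    (LinearMap.mkContinuous_norm_le _ zero_le_one _) x

lemma retr_jmap (q : ℕ) (y) : retr 𝕜 B q (jmap 𝕜 B (q + 1) y) = y := by
  apply ContinuousLinearMap.ext
  intro w
  rfl

lemma retr_trC_jmap (q a : ℕ) (h : a = q + 1) (h' : a + 1 = q + 2) (x) :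
    retr 𝕜 B q (trC 𝕜 B h' (jmap 𝕜 B a x)) = trC 𝕜 B h x := by
  subst h
  exact retr_jmap 𝕜 B q x

/-- iterated retraction `D^{2(p+n+1)} → D^{2(p+1)}` -/
noncomputable def down (p : ℕ) : (n : ℕ) →
    (evenDual 𝕜 B (p + n + 1)).carrier →L[𝕜] (evenDual 𝕜 B (p + 1)).carrier
  | 0 => ContinuousLinearMap.id 𝕜 _
  | n + 1 => (down p n).comp (retr 𝕜 B (p + n))

lemma down_norm (p n : ℕ) (x) : ‖down 𝕜 B p n x‖ ≤ ‖x‖ := by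
  induction n with
  | zero => exact le_rfl
  | succ n ih =>
    calc ‖down 𝕜 B p (n+1) x‖ = ‖down 𝕜 B p n (retr 𝕜 B (p+n) x)‖ := rfl
    _ ≤ ‖retr 𝕜 B (p+n) x‖ := ih _
    _ ≤ ‖x‖ := retr_norm 𝕜 B _ x

lemma up_eq_of_eq (m d d' : ℕ) (hd : d = d') (k : ℕ) (h : m + d = k) (h' : m + d' = k) (x) :
    trC 𝕜 B h (up 𝕜 B m d x) = trC 𝕜 B h' (up 𝕜 B m d' x) := by subst hd; rfl

lemma down_eq_of_eq (p n n' a : ℕ) (hn : n = n') (h : a = p + n + 1) (h' : a = p + n' + 1) (x) :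
    down 𝕜 B p n (trC 𝕜 B h x) = down 𝕜 B p n' (trC 𝕜 B h' x) := by subst hn; rfl

/-- the compatible family mapping everything to `D^{2(p+1)}` -/
noncomputable def fam (p : ℕ) (m : ℕ) :
    (evenDual 𝕜 B m).carrier →L[𝕜] (evenDual 𝕜 B (p + 1)).carrier :=
  if h : m < p + 1 then
    (trC 𝕜 B (by omega : m + (p + 1 - m) = p + 1)).comp (up 𝕜 B m (p + 1 - m))
  else
    (down 𝕜 B p (m - (p + 1))).comp (trC 𝕜 B (by omega : m = p + (m - (p + 1)) + 1))

lemma fam_norm (p m : ℕ) : ‖fam 𝕜 B p m‖ ≤ 1 := by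
  apply ContinuousLinearMap.opNorm_le_bound _ zero_le_one
  intro x
  rw [one_mul]
  unfold fam
  split
  · calc ‖trC 𝕜 B _ (up 𝕜 B m _ x)‖ = ‖up 𝕜 B m _ x‖ := trC_norm ..
      _ ≤ ‖x‖ := up_norm ..
  · calc ‖down 𝕜 B p _ (trC 𝕜 B _ x)‖ ≤ ‖trC 𝕜 B _ x‖ := down_norm ..
      _ = ‖x‖ := trC_norm ..

lemma fam_self (p : ℕ) (x) : fam 𝕜 B p (p + 1) x = x := by
  unfold fam
  rw [dif_neg (by omega)]
  show down 𝕜 B p ((p+1) - (p+1)) (trC 𝕜 B _ x) = x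
  rw [down_eq_of_eq 𝕜 B p _ 0 (p+1) (by omega) _ (by omega : p + 1 = p + 0 + 1)]
  rfl

lemma fam_compat (p m : ℕ) (x) :
    fam 𝕜 B p (m + 1) (jmap 𝕜 B m x) = fam 𝕜 B p m x := by
  unfold fam
  rcases lt_trichotomy (m + 1) (p + 1) with hlt | heq | hgt
  · -- both up branches
    rw [dif_pos hlt, dif_pos (by omega)]
    show trC 𝕜 B _ (up 𝕜 B (m+1) (p+1-(m+1)) (jmap 𝕜 B m x)) = trC 𝕜 B _ (up 𝕜 B m (p+1-m) x)
    rw [up_eq_of_eq 𝕜 B m _ ((p+1-(m+1))+1) (by omega) (p+1) (by omega) (by omega)]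
    rw [up_succ 𝕜 B m (p+1-(m+1)) (by omega)]
    rw [trC_trC]
  · -- m + 1 = p + 1
    rw [dif_neg (by omega), dif_pos (by omega)]
    show down 𝕜 B p ((m+1)-(p+1)) (trC 𝕜 B _ (jmap 𝕜 B m x)) =
      trC 𝕜 B _ (up 𝕜 B m (p+1-m) x)
    rw [down_eq_of_eq 𝕜 B p _ 0 (m+1) (by omega) _ (by omega : m + 1 = p + 0 + 1)]
    rw [up_eq_of_eq 𝕜 B m _ 1 (by omega) (p+1) (by omega) (by omega : m + 1 = p + 1)]
    show trC 𝕜 B _ (jmap 𝕜 B m x) = trC 𝕜 B _ (jmap 𝕜 B (m + 0) (up 𝕜 B m 0 x))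
    rfl
  · -- both down branches
    rw [dif_neg (by omega), dif_neg (by omega)]
    show down 𝕜 B p ((m+1)-(p+1)) (trC 𝕜 B _ (jmap 𝕜 B m x)) =
      down 𝕜 B p (m-(p+1)) (trC 𝕜 B _ x)
    rw [down_eq_of_eq 𝕜 B p _ ((m-(p+1))+1) (m+1) (by omega) _ (by omega : m + 1 = p + ((m-(p+1))+1) + 1)]
    show down 𝕜 B p (m-(p+1)) (retr 𝕜 B (p + (m-(p+1))) (trC 𝕜 B _ (jmap 𝕜 B m x))) = _
    rw [retr_trC_jmap 𝕜 B (p + (m-(p+1))) m (by omega)]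

/-- For `k ≥ 1`, the limit embedding `i_{2k}` of a hyperdual is a contractive section. -/
theorem hyperdual_embedding_isSection (X : Type u) [NormedAddCommGroup X] [NormedSpace 𝕜 X]
    (Xt : Type u) [NormedAddCommGroup Xt] [NormedSpace 𝕜 Xt]
    (i : ∀ k : ℕ, (evenDual 𝕜 ⟨X⟩ k).carrier →L[𝕜] Xt)
    (h : IsHyperdual 𝕜 X Xt i) :
    ∀ k : ℕ, 1 ≤ k →
      ∃ r : Xt →L[𝕜] (evenDual 𝕜 ⟨X⟩ k).carrier,
        ‖r‖ ≤ 1 ∧ ∀ x, r (i k x) = x := by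
  intro k hk
  obtain ⟨p, rfl⟩ : ∃ p, k = p + 1 := ⟨k - 1, by omega⟩
  obtain ⟨⟨F, hF, -⟩, hnorm⟩ :=
    h.2.2 (evenDual 𝕜 ⟨X⟩ (p + 1)).carrier (fam 𝕜 ⟨X⟩ p)
      (fun m => fam_norm 𝕜 ⟨X⟩ p m) (fun m x => fam_compat 𝕜 ⟨X⟩ p m x)
  exact ⟨F, hnorm F hF, fun x => by rw [hF (p + 1) x, fam_self]⟩
end

section
/- A hyperdual of a normed space X is simultaneously a hyperdual of every even iterated dual of X: if (X̃, (i_{2k})_{k≥0}) is a hyperdual of X over 𝕜 and m ≥ 0, then (X̃, (i_{2(m+k)})_{k≥0}) is a hyperdual of D^{2m}(X), i.e. it satisfies the compatibility equations and the factorization universal property of Definition 1 for the sequence of even iterated duals of D^{2m}(X). -/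
/-!
STATEMENT 3: A hyperdual of `X` is simultaneously a hyperdual of every even iterated dual of
`X`: if `(X̃, (i_{2k}))` is a hyperdual of `X` and `m ≥ 0`, then `(X̃, (i_{2(m+k)})_{k≥0})`
satisfies the compatibility equations and the norm-≤-1 factorization universal property
for the sequence of even iterated duals of `D^{2m}(X)` (which are the `D^{2(m+k)}(X)`).
-/

open NormedSpace

universe u

variable (𝕜 : Type u) [RCLike 𝕜]

/-! ### Auxiliary machinery for the proof -/

/-- Iterated canonical embeddings `D^{2k}(X) → D^{2(k+l)}(X)`. -/
noncomputable def jIter (B : NSpace 𝕜) :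
    ∀ (k l : ℕ), (evenDual 𝕜 B k).carrier →L[𝕜] (evenDual 𝕜 B (k + l)).carrier
  | _, 0 => ContinuousLinearMap.id 𝕜 _
  | k, l + 1 => (jmap 𝕜 B (k + l)).comp (jIter B k l)

/-- Transport along an equality of indices. -/
noncomputable def castMap (B : NSpace 𝕜) {a b : ℕ} (h : a = b) :
    (evenDual 𝕜 B a).carrier →L[𝕜] (evenDual 𝕜 B b).carrier :=
  h ▸ ContinuousLinearMap.id 𝕜 _

theorem apply_castMap (B : NSpace 𝕜) {Z : Type*}
    (P : ∀ k, (evenDual 𝕜 B k).carrier → Z) {a b : ℕ} (h : a = b)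
    (x : (evenDual 𝕜 B a).carrier) : P b (castMap 𝕜 B h x) = P a x := by
  subst h; rfl

theorem castMap_castMap (B : NSpace 𝕜) {a b c : ℕ} (h1 : a = b) (h2 : b = c)
    (x : (evenDual 𝕜 B a).carrier) :
    castMap 𝕜 B h2 (castMap 𝕜 B h1 x) = castMap 𝕜 B (h1.trans h2) x := by
  subst h1; subst h2; rfl

theorem jmap_castMap (B : NSpace 𝕜) {a b : ℕ} (h : a = b) (h' : a + 1 = b + 1)
    (x : (evenDual 𝕜 B a).carrier) :
    jmap 𝕜 B b (castMap 𝕜 B h x) = castMap 𝕜 B h' (jmap 𝕜 B a x) := by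
  subst h; rfl

theorem norm_castMap_le (B : NSpace 𝕜) {a b : ℕ} (h : a = b) :
    ‖castMap 𝕜 B h‖ ≤ 1 := by
  subst h; exact ContinuousLinearMap.norm_id_le

theorem norm_jmap_le (B : NSpace 𝕜) (k : ℕ) : ‖jmap 𝕜 B k‖ ≤ 1 :=
  inclusionInDoubleDual_norm_le 𝕜 _

theorem norm_jIter_le (B : NSpace 𝕜) (k l : ℕ) : ‖jIter 𝕜 B k l‖ ≤ 1 := by
  induction l with
  | zero => exact ContinuousLinearMap.norm_id_le
  | succ l ih =>
    calc ‖(jmap 𝕜 B (k + l)).comp (jIter 𝕜 B k l)‖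
        ≤ ‖jmap 𝕜 B (k + l)‖ * ‖jIter 𝕜 B k l‖ := ContinuousLinearMap.opNorm_comp_le _ _
      _ ≤ 1 := mul_le_one₀ (norm_jmap_le 𝕜 B _) (norm_nonneg _) ih

/-- Commuting `jIter` past a single `jmap` on the left. -/
theorem jIter_succ_left (B : NSpace 𝕜) :
    ∀ (l k : ℕ) (h : (k + 1) + l = k + (l + 1)) (x : (evenDual 𝕜 B k).carrier),
    jIter 𝕜 B k (l + 1) x = castMap 𝕜 B h (jIter 𝕜 B (k + 1) l (jmap 𝕜 B k x))
  | 0, k, h, x => rfl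
  | l + 1, k, h, x => by
    show jmap 𝕜 B (k + (l + 1)) (jIter 𝕜 B k (l + 1) x) = _
    rw [jIter_succ_left B l k (by omega),
      jmap_castMap 𝕜 B (by omega : (k + 1) + l = k + (l + 1)) (by omega)]
    rfl

/-- Compatible families are compatible with iterated embeddings. -/
theorem family_jIter (B : NSpace 𝕜) {Z : Type*}
    (P : ∀ k, (evenDual 𝕜 B k).carrier → Z)
    (hP : ∀ k x, P (k + 1) (jmap 𝕜 B k x) = P k x) :
    ∀ (l k : ℕ) (x : (evenDual 𝕜 B k).carrier), P (k + l) (jIter 𝕜 B k l x) = P k x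
  | 0, k, x => rfl
  | l + 1, k, x => by
    show P ((k + l) + 1) (jmap 𝕜 B (k + l) (jIter 𝕜 B k l x)) = P k x
    rw [hP (k + l), family_jIter B P hP l k x]

/-- Extension of a shifted family to a full family on all even iterated duals. -/
noncomputable def extFam (B : NSpace 𝕜) {Y : Type u}
    [NormedAddCommGroup Y] [NormedSpace 𝕜 Y] (m : ℕ)
    (f : ∀ k : ℕ, (evenDual 𝕜 B (m + k)).carrier →L[𝕜] Y) (k : ℕ) :
    (evenDual 𝕜 B k).carrier →L[𝕜] Y :=
  if hk : m ≤ k then (f (k - m)).comp (castMap 𝕜 B (Nat.add_sub_cancel' hk).symm)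
  else (f 0).comp
    ((castMap 𝕜 B (Nat.add_sub_cancel' (Nat.le_of_lt (Nat.lt_of_not_le hk)))).comp
      (jIter 𝕜 B k (m - k)))

/-- A hyperdual of `X` is a hyperdual of every even iterated dual `D^{2m}(X)`:
under the identification `D^{2k}(D^{2m}(X)) = D^{2(m+k)}(X)`, the shifted family
`(i_{2(m+k)})` again satisfies all clauses of the definition of a hyperdual. -/
theorem hyperdual_of_evenDual (X : Type u) [NormedAddCommGroup X] [NormedSpace 𝕜 X]
    (Xt : Type u) [NormedAddCommGroup Xt] [NormedSpace 𝕜 Xt]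
    (i : ∀ k : ℕ, (evenDual 𝕜 ⟨X⟩ k).carrier →L[𝕜] Xt)
    (h : IsHyperdual 𝕜 X Xt i) (m : ℕ) :
    (∀ k, Isometry (i (m + k))) ∧
    (∀ k x, i (m + k + 1) (jmap 𝕜 ⟨X⟩ (m + k) x) = i (m + k) x) ∧
    (∀ (Y : Type u) [NormedAddCommGroup Y] [NormedSpace 𝕜 Y]
        (f : ∀ k : ℕ, (evenDual 𝕜 ⟨X⟩ (m + k)).carrier →L[𝕜] Y),
        (∀ k, ‖f k‖ ≤ 1) →
        (∀ k x, f (k + 1) (jmap 𝕜 ⟨X⟩ (m + k) x) = f k x) →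
        (∃! F : Xt →L[𝕜] Y, ∀ k x, F (i (m + k) x) = f k x) ∧
          ∀ F : Xt →L[𝕜] Y, (∀ k x, F (i (m + k) x) = f k x) → ‖F‖ ≤ 1) := by
  obtain ⟨hiso, hicomp, huniv⟩ := h
  refine ⟨fun k => hiso (m + k), fun k x => hicomp (m + k) x, ?_⟩
  intro Y _ _ f hf hcompat
  -- transporting `f` along equalities of indices
  have keyf : ∀ (a b : ℕ) (hab : a = b) (hm : m + a = m + b)
      (x : (evenDual 𝕜 ⟨X⟩ (m + a)).carrier),
      f b (castMap 𝕜 ⟨X⟩ hm x) = f a x := by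
    rintro a b rfl hm x; rfl
  have factA : ∀ k x, extFam 𝕜 ⟨X⟩ m f (m + k) x = f k x := by
    intro k x
    rw [extFam, dif_pos (Nat.le_add_right m k)]
    exact keyf k (m + k - m) (by omega) _ x
  have factB : ∀ k x, extFam 𝕜 ⟨X⟩ m f (k + 1) (jmap 𝕜 ⟨X⟩ k x) = extFam 𝕜 ⟨X⟩ m f k x := by
    intro k x
    by_cases hk : m ≤ k
    · obtain ⟨a, rfl⟩ : ∃ a, k = m + a := ⟨k - m, by omega⟩
      rw [extFam, dif_pos (by omega : m ≤ m + a + 1)]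
      have h1 : ((f (m + a + 1 - m)).comp
          (castMap 𝕜 ⟨X⟩ (Nat.add_sub_cancel' (by omega : m ≤ m + a + 1)).symm))
          (jmap 𝕜 ⟨X⟩ (m + a) x) = f (a + 1) (jmap 𝕜 ⟨X⟩ (m + a) x) :=
        keyf (a + 1) (m + a + 1 - m) (by omega) _ _
      rw [h1, hcompat a x, ← factA a x]
    · by_cases hk1 : m ≤ k + 1
      · have hm1 : m = k + 1 := by omega
        subst hm1
        rw [extFam, dif_pos (le_refl (k + 1)), extFam, dif_neg hk]
        have h1 : ((f (k + 1 - (k + 1))).comp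
            (castMap 𝕜 ⟨X⟩ (Nat.add_sub_cancel' (le_refl (k + 1))).symm))
            (jmap 𝕜 ⟨X⟩ k x) = f 0 (jmap 𝕜 ⟨X⟩ k x) :=
          keyf 0 (k + 1 - (k + 1)) (by omega) _ _
        rw [h1]
        have hj : ∀ (l : ℕ) (hl : l = 1) (hh : k + l = k + 1)
            (x : (evenDual 𝕜 ⟨X⟩ k).carrier),
            castMap 𝕜 ⟨X⟩ hh (jIter 𝕜 ⟨X⟩ k l x) = jmap 𝕜 ⟨X⟩ k x := by
          rintro l rfl hh x; rfl
        show _ = f 0 (castMap 𝕜 ⟨X⟩ _ (jIter 𝕜 ⟨X⟩ k (k + 1 - k) x))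
        rw [hj (k + 1 - k) (by omega)]
      · rw [extFam, dif_neg hk1, extFam, dif_neg hk]
        have hstep : ∀ (l l' : ℕ) (hl : l = l' + 1) (hh : k + l = m)
            (hh' : (k + 1) + l' = m) (x : (evenDual 𝕜 ⟨X⟩ k).carrier),
            castMap 𝕜 ⟨X⟩ hh (jIter 𝕜 ⟨X⟩ k l x)
              = castMap 𝕜 ⟨X⟩ hh' (jIter 𝕜 ⟨X⟩ (k + 1) l' (jmap 𝕜 ⟨X⟩ k x)) := by
          rintro l l' rfl hh hh' x
          rw [jIter_succ_left 𝕜 ⟨X⟩ l' k (by omega), castMap_castMap]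
        show f 0 (castMap 𝕜 ⟨X⟩ _ (jIter 𝕜 ⟨X⟩ (k + 1) (m - (k + 1)) (jmap 𝕜 ⟨X⟩ k x)))
          = f 0 (castMap 𝕜 ⟨X⟩ _ (jIter 𝕜 ⟨X⟩ k (m - k) x))
        exact congrArg (f 0) (hstep (m - k) (m - (k + 1)) (by omega) _ _ x).symm
  have factC : ∀ k, ‖extFam 𝕜 ⟨X⟩ m f k‖ ≤ 1 := by
    intro k
    rw [extFam]
    split_ifs with hk
    · exact le_trans (ContinuousLinearMap.opNorm_comp_le _ _)
        (mul_le_one₀ (hf _) (norm_nonneg _) (norm_castMap_le 𝕜 ⟨X⟩ _))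
    · refine le_trans (ContinuousLinearMap.opNorm_comp_le _ _)
        (mul_le_one₀ (hf _) (norm_nonneg _) ?_)
      exact le_trans (ContinuousLinearMap.opNorm_comp_le _ _)
        (mul_le_one₀ (norm_castMap_le 𝕜 ⟨X⟩ _) (norm_nonneg _) (norm_jIter_le 𝕜 ⟨X⟩ _ _))
  have factD : ∀ (F : Xt →L[𝕜] Y), (∀ k x, F (i (m + k) x) = f k x) →
      ∀ k x, F (i k x) = extFam 𝕜 ⟨X⟩ m f k x := by
    intro F hF k x
    by_cases hk : m ≤ k
    · obtain ⟨a, rfl⟩ : ∃ a, k = m + a := ⟨k - m, by omega⟩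
      exact (hF a x).trans (factA a x).symm
    · have hIm : ∀ (a : ℕ) (ha : a = m) (y : (evenDual 𝕜 ⟨X⟩ a).carrier) (ha' : a = m),
          F (i a y) = f 0 (castMap 𝕜 ⟨X⟩ ha' y) := by
        rintro a rfl y ha'; exact hF 0 y
      have h1 : F (i k x)
          = F (i (k + (m - k)) (jIter 𝕜 ⟨X⟩ k (m - k) x)) :=
        (family_jIter 𝕜 ⟨X⟩ (fun n y => F (i n y))
          (fun n y => congrArg F (hicomp n y)) (m - k) k x).symm
      rw [extFam, dif_neg hk]
      exact h1.trans (hIm _ (by omega) _ _)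
  obtain ⟨⟨F, hFg, hFuniq⟩, hnorm⟩ := huniv Y (extFam 𝕜 ⟨X⟩ m f) factC factB
  exact ⟨⟨F, fun k x => (hFg (m + k) x).trans (factA k x),
      fun F' hF' => hFuniq F' (factD F' hF')⟩,
    fun F' hF' => hnorm F' (factD F' hF')⟩
end

section
/- If X is a reflexive Banach space over 𝕜 and (X̃, (i_{2k})) is a hyperdual of X, then the limit embedding i_0 : X → X̃ is a surjective linear isometry, i.e. an isometric isomorphism of X onto X̃. -/
/-!
STATEMENT 4: If `X` is a reflexive Banach space and `(X̃, (i_{2k}))` is a hyperdual of `X`,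
then the limit embedding `i_0 : X → X̃` is a surjective linear isometry (an isometric
isomorphism of `X` onto `X̃`).
-/

open NormedSpace

universe u

variable (𝕜 : Type u) [RCLike 𝕜]

/-- If `E` is reflexive then so is its dual. -/
lemma dual_surj_aux {E : Type u} [NormedAddCommGroup E] [NormedSpace 𝕜 E]
    (hE : Function.Surjective (inclusionInDoubleDual 𝕜 E)) :
    Function.Surjective (inclusionInDoubleDual 𝕜 (StrongDual 𝕜 E)) := by
  intro Φ
  refine ⟨Φ.comp (inclusionInDoubleDual 𝕜 E), ?_⟩
  ext ψ
  obtain ⟨x, rfl⟩ := hE ψ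
  simp [dual_def]

/-- For a reflexive Banach space `X`, the limit embedding `i_0` of any hyperdual of `X`
is a surjective linear isometry. -/
theorem hyperdual_of_reflexive (X : Type u) [NormedAddCommGroup X] [NormedSpace 𝕜 X]
    [CompleteSpace X]
    (hrefl : Function.Surjective (inclusionInDoubleDual 𝕜 X))
    (Xt : Type u) [NormedAddCommGroup Xt] [NormedSpace 𝕜 Xt]
    (i : ∀ k : ℕ, (evenDual 𝕜 ⟨X⟩ k).carrier →L[𝕜] Xt)
    (h : IsHyperdual 𝕜 X Xt i) :
    Isometry (i 0) ∧ Function.Surjective (i 0) := by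
  obtain ⟨hiso, hcompat, huniv⟩ := h
  refine ⟨hiso 0, ?_⟩
  -- all the maps `jmap k` are surjective
  have jsurj : ∀ k, Function.Surjective (jmap 𝕜 ⟨X⟩ k) := by
    intro k
    induction k with
    | zero => exact hrefl
    | succ n ih => exact dual_surj_aux 𝕜 (dual_surj_aux 𝕜 ih)
  -- the range of every `i k` is contained in the range of `i 0`
  have hrange : ∀ k (x : (evenDual 𝕜 ⟨X⟩ k).carrier), ∃ y : X, i k x = i 0 y := by
    intro k
    induction k with
    | zero => exact fun x => ⟨x, rfl⟩
    | succ n ih =>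
      intro x
      obtain ⟨z, rfl⟩ := jsurj n x
      obtain ⟨y, hy⟩ := ih z
      exact ⟨y, (hcompat n z).trans hy⟩
  -- the range of `i 0` is a closed submodule
  set M : Submodule 𝕜 Xt := LinearMap.range ((i 0) : X →L[𝕜] Xt).toLinearMap with hM
  haveI : CompleteSpace (evenDual 𝕜 ⟨X⟩ 0).carrier := inferInstanceAs (CompleteSpace X)
  have hclosed : IsClosed (M : Set Xt) := by
    have : IsClosed (Set.range (i 0)) := ((hiso 0).isClosedEmbedding).isClosed_range
    simpa [hM, LinearMap.coe_range] using this
  haveI : IsClosed (M : Set Xt) := hclosed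
  -- apply the universal property with the zero family into the quotient `Xt ⧸ M`
  have hQ : ∀ z : Xt, (Submodule.mkQ M) z = 0 := by
    have key := huniv (Xt ⧸ M) (fun _ => 0) (fun _ => by simp) (fun _ _ => rfl)
    obtain ⟨⟨F, hF, hFu⟩, _⟩ := key
    have hQc : Continuous (Submodule.mkQ M) := continuous_quot_mk
    set Q : Xt →L[𝕜] Xt ⧸ M := ⟨Submodule.mkQ M, hQc⟩ with hQdef
    have h1 : Q = F := by
      refine hFu Q fun k x => ?_
      obtain ⟨y, hy⟩ := hrange k x
      have : i k x ∈ M := ⟨y, hy.symm⟩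
      simpa [hQdef] using (Submodule.Quotient.mk_eq_zero M).mpr this
    have h0 : (0 : Xt →L[𝕜] Xt ⧸ M) = F := hFu 0 fun k x => by simp
    intro z
    have : Q z = (0 : Xt →L[𝕜] Xt ⧸ M) z := by rw [h1, h0]
    simpa [hQdef] using this
  intro z
  have : z ∈ M := (Submodule.Quotient.mk_eq_zero M).mp (hQ z)
  obtain ⟨y, hy⟩ := this
  exact ⟨y, hy⟩
end

section
/- Let (X̃, (i_{2k})) be a hyperdual of a normed space X over 𝕜. For every family of functionals ψ_k ∈ D^{2k+1}(X) (k ≥ 0) satisfying the compatibility D(j_{D^{2k}(X)})(ψ_{k+1}) = ψ_k for all k (i.e. ψ_{k+1} ∘ j_{D^{2k}(X)} = ψ_k) and with sup_k ‖ψ_k‖ < ∞, there exists a unique continuous linear functional Ψ ∈ D(X̃) such that Ψ ∘ i_{2k} = ψ_k for all k; moreover ‖Ψ‖ = sup_k ‖ψ_k‖. -/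
/-!
STATEMENT 6: Let `(X̃, (i_{2k}))` be a hyperdual of `X`. For every family of functionals
`ψ_k ∈ D^{2k+1}(X)` with `ψ_{k+1} ∘ j_{D^{2k}(X)} = ψ_k` and `sup_k ‖ψ_k‖ < ∞`, there is a
unique `Ψ ∈ D(X̃)` with `Ψ ∘ i_{2k} = ψ_k` for all `k`; moreover `‖Ψ‖ = sup_k ‖ψ_k‖`.
(Here `D^{2k+1}(X) = D(D^{2k}(X))` is the space of continuous linear functionals on
`D^{2k}(X)`.)
-/

open NormedSpace

universe u

variable (𝕜 : Type u) [RCLike 𝕜]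

/-- A bounded compatible family of odd-dual functionals `ψ_k ∈ D^{2k+1}(X)` extends uniquely
to a functional `Ψ ∈ D(X̃)` on a hyperdual, and `‖Ψ‖ = ⨆ k, ‖ψ_k‖`. -/
theorem hyperdual_dual_functional (X : Type u) [NormedAddCommGroup X] [NormedSpace 𝕜 X]
    (Xt : Type u) [NormedAddCommGroup Xt] [NormedSpace 𝕜 Xt]
    (i : ∀ k : ℕ, (evenDual 𝕜 ⟨X⟩ k).carrier →L[𝕜] Xt)
    (h : IsHyperdual 𝕜 X Xt i)
    (ψ : ∀ k : ℕ, (evenDual 𝕜 ⟨X⟩ k).carrier →L[𝕜] 𝕜)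
    (hcomp : ∀ k x, ψ (k + 1) (jmap 𝕜 ⟨X⟩ k x) = ψ k x)
    (hbdd : BddAbove (Set.range fun k => ‖ψ k‖)) :
    (∃! Ψ : Xt →L[𝕜] 𝕜, ∀ k x, Ψ (i k x) = ψ k x) ∧
      ∀ Ψ : Xt →L[𝕜] 𝕜, (∀ k x, Ψ (i k x) = ψ k x) → ‖Ψ‖ = ⨆ k, ‖ψ k‖ := by
  classical
  set M : ℝ := ⨆ k, ‖ψ k‖ with hM
  have hMle : ∀ k, ‖ψ k‖ ≤ M := fun k => le_ciSup hbdd k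
  have hM0 : 0 ≤ M := le_trans (norm_nonneg _) (hMle 0)
  -- generic scaled family
  have key : ∀ c : ℝ, M < c →
      (∃! F : Xt →L[𝕜] 𝕜, ∀ k x, F (i k x) = ((c : 𝕜))⁻¹ • ψ k x) ∧
        ∀ F : Xt →L[𝕜] 𝕜, (∀ k x, F (i k x) = ((c : 𝕜))⁻¹ • ψ k x) → ‖F‖ ≤ 1 := by
    intro c hc
    have hcpos : (0:ℝ) < c := lt_of_le_of_lt hM0 hc
    have hnorm : ∀ k, ‖((c : 𝕜))⁻¹ • ψ k‖ ≤ 1 := by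
      intro k
      rw [norm_smul ((c : 𝕜))⁻¹ (ψ k), norm_inv, RCLike.norm_ofReal, abs_of_pos hcpos]
      rw [inv_mul_le_iff₀ hcpos, mul_one]
      exact le_trans (hMle k) hc.le
    have hcomp' : ∀ k x, (((c : 𝕜))⁻¹ • ψ (k + 1)) (jmap 𝕜 ⟨X⟩ k x)
        = (((c : 𝕜))⁻¹ • ψ k) x := by
      intro k x
      simp [hcomp k x]
    have := h.2.2 𝕜 (fun k => ((c : 𝕜))⁻¹ • ψ k) hnorm hcomp'
    exact ⟨this.1, this.2⟩
  have hone : M < M + 1 := by linarith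
  obtain ⟨⟨F, hF, hFuniq⟩, -⟩ := key (M + 1) hone
  have hc1 : ((M + 1 : ℝ) : 𝕜) ≠ 0 := by
    simp only [ne_eq, RCLike.ofReal_eq_zero]
    linarith
  refine ⟨⟨((M + 1 : ℝ) : 𝕜) • F, ?_, ?_⟩, ?_⟩
  · intro k x
    simp only [ContinuousLinearMap.smul_apply, hF k x, smul_smul,
      mul_inv_cancel₀ hc1, one_smul]
  · intro Ψ' hΨ'
    have : ((M + 1 : ℝ) : 𝕜)⁻¹ • Ψ' = F := by
      apply hFuniq
      intro k x
      simp [hΨ' k x]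
    calc Ψ' = ((M + 1 : ℝ) : 𝕜) • (((M + 1 : ℝ) : 𝕜)⁻¹ • Ψ') := by
              rw [smul_smul, mul_inv_cancel₀ hc1, one_smul]
      _ = ((M + 1 : ℝ) : 𝕜) • F := by rw [this]
  · intro Ψ hΨ
    refine le_antisymm ?_ ?_
    · -- ‖Ψ‖ ≤ M
      refine le_of_forall_pos_le_add ?_
      intro ε hε
      have hlt : M < M + ε := by linarith
      obtain ⟨-, hb⟩ := key (M + ε) hlt
      have hc2 : ((M + ε : ℝ) : 𝕜) ≠ 0 := by
        simp only [ne_eq, RCLike.ofReal_eq_zero]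
        linarith
      have hGi : ∀ k x, (((M + ε : ℝ) : 𝕜)⁻¹ • Ψ) (i k x)
          = ((M + ε : ℝ) : 𝕜)⁻¹ • ψ k x := by
        intro k x
        simp [hΨ k x]
      have := hb _ hGi
      have hn : ‖((M + ε : ℝ) : 𝕜)⁻¹ • Ψ‖ = (M + ε)⁻¹ * ‖Ψ‖ := by
        rw [norm_smul ((M + ε : ℝ) : 𝕜)⁻¹ Ψ, norm_inv, RCLike.norm_ofReal,
          abs_of_pos (by linarith : (0:ℝ) < M + ε)]
      rw [hn, inv_mul_le_iff₀ (by linarith : (0:ℝ) < M + ε), mul_one] at this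
      exact this
    · -- M ≤ ‖Ψ‖
      refine ciSup_le ?_
      intro k
      refine ContinuousLinearMap.opNorm_le_bound _ (norm_nonneg Ψ) ?_
      intro x
      calc ‖ψ k x‖ = ‖Ψ (i k x)‖ := by rw [hΨ k x]
        _ ≤ ‖Ψ‖ * ‖i k x‖ := Ψ.le_opNorm _
        _ = ‖Ψ‖ * ‖x‖ := by
            rw [(h.1 k).norm_map_of_map_zero (map_zero _)]
end

section
/- The normed dual functor turns covering norm-1 direct limits into inverse limits: let (X, (i_n)) be a covering norm-1 direct limit of a direct sequence (X_n, i_{n,n+1}) of normed spaces over 𝕜. Then for every family of continuous linear functionals φ_n ∈ D(X_n) satisfying φ_{n+1} ∘ i_{n,n+1} = φ_n for all n and sup_n ‖φ_n‖ < ∞, there exists a unique φ ∈ D(X) with φ ∘ i_n = φ_n for all n, and ‖φ‖ = sup_n ‖φ_n‖. -/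
/-!
Dividing the family `φ_n` by a constant exceeding `sup_n ‖φ_n‖` brings it within reach of the
norm-1 universal property, which yields the extension `Φ`. Since every point of `X` is some
`i_n y` with `‖i_n y‖ = ‖y‖`, the norm of any functional on `X` is the supremum of the norms of
its restrictions along the `i_n`.
-/

universe u

variable (𝕜 : Type u) [RCLike 𝕜]

/-- `(L, (i_n))` is a norm-1 direct limit of the direct sequence `(Xs, b)`:
the `i_n` are compatible isometries and every compatible family of maps of norm `≤ 1`
into a normed space `Y` factors uniquely through `L`, the factorization having norm `≤ 1`. -/
def IsDirLimit (Xs : ℕ → NSpace 𝕜)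
    (b : ∀ n : ℕ, (Xs n).carrier →L[𝕜] (Xs (n + 1)).carrier)
    (L : Type u) [NormedAddCommGroup L] [NormedSpace 𝕜 L]
    (i : ∀ n : ℕ, (Xs n).carrier →L[𝕜] L) : Prop :=
  (∀ n, Isometry (i n)) ∧
  (∀ n x, i (n + 1) (b n x) = i n x) ∧
  (∀ (Y : Type u) [NormedAddCommGroup Y] [NormedSpace 𝕜 Y]
      (f : ∀ n : ℕ, (Xs n).carrier →L[𝕜] Y),
      (∀ n, ‖f n‖ ≤ 1) →
      (∀ n x, f (n + 1) (b n x) = f n x) →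
      (∃! F : L →L[𝕜] Y, ∀ n x, F (i n x) = f n x) ∧
        ∀ F : L →L[𝕜] Y, (∀ n x, F (i n x) = f n x) → ‖F‖ ≤ 1)

section

variable {𝕜}

theorem ContinuousLinearMap.opNorm_eq_iSup_opNorm_comp_of_covering {ι : Type*}
    {E : ι → Type*} [∀ n, NormedAddCommGroup (E n)] [∀ n, NormedSpace 𝕜 (E n)]
    {L Y : Type*} [NormedAddCommGroup L] [NormedSpace 𝕜 L]
    [NormedAddCommGroup Y] [NormedSpace 𝕜 Y]
    {i : ∀ n, E n →L[𝕜] L} (hi : ∀ n, Isometry (i n)) (hcov : ∀ x : L, ∃ n y, i n y = x)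
    (Φ : L →L[𝕜] Y) :
    ‖Φ‖ = ⨆ n, ‖Φ.comp (i n)‖ := by
  have norm_i : ∀ n y, ‖i n y‖ = ‖y‖ := fun n => (hi n).norm_map_of_map_zero (map_zero _)
  have comp_le : ∀ n, ‖Φ.comp (i n)‖ ≤ ‖Φ‖ := fun n =>
    opNorm_le_bound _ (norm_nonneg Φ) fun y => norm_i n y ▸ Φ.le_opNorm (i n y)
  have : Nonempty ι := ⟨(hcov 0).choose⟩
  refine le_antisymm ?_ (ciSup_le comp_le)
  refine opNorm_le_bound _ (Real.iSup_nonneg fun n => norm_nonneg _) fun x => ?_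
  obtain ⟨n, y, rfl⟩ := hcov x
  calc ‖Φ (i n y)‖ = ‖Φ.comp (i n) y‖ := rfl
    _ ≤ ‖Φ.comp (i n)‖ * ‖y‖ := le_opNorm _ y
    _ ≤ (⨆ n, ‖Φ.comp (i n)‖) * ‖i n y‖ := by
      rw [norm_i]
      gcongr
      exact le_ciSup ⟨‖Φ‖, Set.forall_mem_range.2 comp_le⟩ n

theorem IsDirLimit.existsUnique_lift_of_norm_le {Xs : ℕ → NSpace 𝕜}
    {b : ∀ n : ℕ, (Xs n).carrier →L[𝕜] (Xs (n + 1)).carrier}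
    {L : Type u} [NormedAddCommGroup L] [NormedSpace 𝕜 L] {i : ∀ n : ℕ, (Xs n).carrier →L[𝕜] L}
    (hlim : IsDirLimit 𝕜 Xs b L i) {Y : Type u} [NormedAddCommGroup Y] [NormedSpace 𝕜 Y]
    (f : ∀ n : ℕ, (Xs n).carrier →L[𝕜] Y) {C : ℝ} (hf : ∀ n, ‖f n‖ ≤ C)
    (hcomp : ∀ n x, f (n + 1) (b n x) = f n x) :
    ∃! F : L →L[𝕜] Y, ∀ n x, F (i n x) = f n x := by
  set c : 𝕜 := ((|C| + 1 : ℝ) : 𝕜)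
  have hc_pos : 0 < |C| + 1 := by positivity
  have hc : c ≠ 0 := RCLike.ofReal_ne_zero.2 hc_pos.ne'
  have hscaled : ∀ n, ‖c⁻¹ • f n‖ ≤ 1 := fun n => by
    rw [norm_smul, norm_inv, RCLike.norm_ofReal, abs_of_pos hc_pos, inv_mul_le_iff₀ hc_pos,
      mul_one]
    linarith [hf n, le_abs_self C]
  obtain ⟨⟨G, hG, hG_unique⟩, -⟩ :=
    hlim.2.2 Y (fun n => c⁻¹ • f n) hscaled fun n x => by simp [hcomp n x]
  refine ⟨c • G, fun n x => ?_, fun F hF => ?_⟩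
  · simp [hG n x, smul_smul, mul_inv_cancel₀ hc]
  · have : c⁻¹ • F = G := hG_unique _ fun n x => by simp [hF n x]
    rw [← this, smul_smul, mul_inv_cancel₀ hc, one_smul]

end

theorem dual_of_dirLimit (Xs : ℕ → NSpace 𝕜)
    (b : ∀ n : ℕ, (Xs n).carrier →L[𝕜] (Xs (n + 1)).carrier)
    (L : Type u) [NormedAddCommGroup L] [NormedSpace 𝕜 L]
    (i : ∀ n : ℕ, (Xs n).carrier →L[𝕜] L)
    (hlim : IsDirLimit 𝕜 Xs b L i)
    (hcov : ∀ x : L, ∃ n y, i n y = x)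
    (φ : ∀ n : ℕ, (Xs n).carrier →L[𝕜] 𝕜)
    (hcomp : ∀ n x, φ (n + 1) (b n x) = φ n x)
    (hbdd : BddAbove (Set.range fun n => ‖φ n‖)) :
    (∃! Φ : L →L[𝕜] 𝕜, ∀ n x, Φ (i n x) = φ n x) ∧
      ∀ Φ : L →L[𝕜] 𝕜, (∀ n x, Φ (i n x) = φ n x) → ‖Φ‖ = ⨆ n, ‖φ n‖ := by
  refine ⟨hlim.existsUnique_lift_of_norm_le φ (le_ciSup hbdd) hcomp, fun Φ hΦ => ?_⟩
  have hφ : ∀ n, φ n = Φ.comp (i n) := fun n => ContinuousLinearMap.ext fun x => (hΦ n x).symm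
  simp only [hφ]
  exact Φ.opNorm_eq_iSup_opNorm_comp_of_covering hlim.1 hcov
end

section
/- If every bonding map of a direct sequence is a contractive section, then so is every limit embedding: let (X_n, i_{n,n+1}) be a direct sequence of normed spaces over 𝕜 such that for every n there exists a continuous linear map r_{n,n+1} : X_{n+1} → X_n with ‖r_{n,n+1}‖ ≤ 1 and r_{n,n+1} ∘ i_{n,n+1} = id on X_n, and let (X, (i_n)) be a norm-1 direct limit of the sequence. Then for every n₀ there exists a continuous linear map r_{n₀} : X → X_{n₀} with ‖r_{n₀}‖ ≤ 1 and r_{n₀} ∘ i_{n₀} = id on X_{n₀}. -/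
universe u

variable (𝕜 : Type u) [RCLike 𝕜]

/-!
Fix `n₀`. Going up from `X_n` to `X_{n₀+n}` along the bonding maps and then down to `X_{n₀}`
along the retractions gives contractions `X_n → X_{n₀}`. They are compatible with the bonding
maps because each retraction undoes the bonding map it sits on, and for `n = n₀` the composite
is the identity. The universal property of the limit turns this family into a contraction
`X → X_{n₀}` that restricts to the identity along `i_{n₀}`.
-/

theorem ContinuousLinearMap.norm_le_one_of_isometry {K E F : Type*} [NontriviallyNormedField K]
    [SeminormedAddCommGroup E] [SeminormedAddCommGroup F] [NormedSpace K E] [NormedSpace K F]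
    (f : E →L[K] F) (hf : Isometry f) : ‖f‖ ≤ 1 :=
  f.opNorm_le_bound zero_le_one fun x => by rw [hf.norm_map_of_map_zero (map_zero f), one_mul]

theorem ContinuousLinearMap.norm_comp_le_one {K E F G : Type*} [NontriviallyNormedField K]
    [SeminormedAddCommGroup E] [SeminormedAddCommGroup F] [SeminormedAddCommGroup G]
    [NormedSpace K E] [NormedSpace K F] [NormedSpace K G] {g : F →L[K] G} {f : E →L[K] F}
    (hg : ‖g‖ ≤ 1) (hf : ‖f‖ ≤ 1) : ‖g.comp f‖ ≤ 1 :=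
  (g.opNorm_comp_le f).trans (mul_le_one₀ hg (norm_nonneg f) hf)

namespace NSpace

variable {K : Type u} [NontriviallyNormedField K] {Xs : ℕ → NSpace K}
  (b : ∀ n : ℕ, (Xs n).carrier →L[K] (Xs (n + 1)).carrier)
  (r : ∀ n : ℕ, (Xs (n + 1)).carrier →L[K] (Xs n).carrier)

noncomputable def iterateBonding {m n : ℕ} (h : m ≤ n) :
    (Xs m).carrier →L[K] (Xs n).carrier :=
  Nat.leRec (ContinuousLinearMap.id K _) (fun k _ g => (b k).comp g) h

noncomputable def iterateRetraction {m n : ℕ} (h : m ≤ n) :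
    (Xs n).carrier →L[K] (Xs m).carrier :=
  Nat.leRec (ContinuousLinearMap.id K _) (fun k _ g => g.comp (r k)) h

@[simp]
theorem iterateBonding_refl (m : ℕ) :
    iterateBonding b (le_refl m) = ContinuousLinearMap.id K _ :=
  Nat.leRec_self _ _

theorem iterateBonding_succ {m n : ℕ} (h : m ≤ n) (h' : m ≤ n + 1) :
    iterateBonding b h' = (b n).comp (iterateBonding b h) :=
  Nat.leRec_succ _ _ h

theorem iterateBonding_comp_bonding {m n : ℕ} (h : m + 1 ≤ n) (h' : m ≤ n) :
    (iterateBonding b h).comp (b m) = iterateBonding b h' := by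
  induction n, h using Nat.le_induction with
  | base => rw [iterateBonding_refl, iterateBonding_succ b le_rfl, iterateBonding_refl]; rfl
  | succ n h ih =>
    rw [iterateBonding_succ b h, iterateBonding_succ b (by omega), ContinuousLinearMap.comp_assoc,
      ih]

theorem norm_iterateBonding_le (hb : ∀ n, ‖b n‖ ≤ 1) {m n : ℕ} (h : m ≤ n) :
    ‖iterateBonding b h‖ ≤ 1 := by
  induction n, h using Nat.le_induction with
  | base => simpa using ContinuousLinearMap.norm_id_le
  | succ n h ih =>
    rw [iterateBonding_succ b h]
    exact ContinuousLinearMap.norm_comp_le_one (hb n) ih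

@[simp]
theorem iterateRetraction_refl (m : ℕ) :
    iterateRetraction r (le_refl m) = ContinuousLinearMap.id K _ :=
  Nat.leRec_self _ _

theorem iterateRetraction_succ {m n : ℕ} (h : m ≤ n) (h' : m ≤ n + 1) :
    iterateRetraction r h' = (iterateRetraction r h).comp (r n) :=
  Nat.leRec_succ _ _ h

theorem norm_iterateRetraction_le (hr : ∀ n, ‖r n‖ ≤ 1) {m n : ℕ} (h : m ≤ n) :
    ‖iterateRetraction r h‖ ≤ 1 := by
  induction n, h using Nat.le_induction with
  | base => simpa using ContinuousLinearMap.norm_id_le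
  | succ n h ih =>
    rw [iterateRetraction_succ r h]
    exact ContinuousLinearMap.norm_comp_le_one ih (hr n)

variable {b r}

theorem iterateRetraction_comp_iterateBonding_succ (hrb : ∀ n x, r n (b n x) = x)
    {j k n : ℕ} (hj : j ≤ n) (hk : k ≤ n) (hj' : j ≤ n + 1) (hk' : k ≤ n + 1) :
    (iterateRetraction r hk').comp (iterateBonding b hj') =
      (iterateRetraction r hk).comp (iterateBonding b hj) := by
  ext x
  simp [iterateRetraction_succ r hk, iterateBonding_succ b hj, hrb]

theorem iterateRetraction_comp_iterateBonding (hrb : ∀ n x, r n (b n x) = x) {m n : ℕ}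
    (h : m ≤ n) :
    (iterateRetraction r h).comp (iterateBonding b h) = ContinuousLinearMap.id K _ := by
  induction n, h using Nat.le_induction with
  | base => simp
  | succ n h ih => rwa [iterateRetraction_comp_iterateBonding_succ hrb h h]

variable (b r)

noncomputable def descend (n₀ n : ℕ) : (Xs n).carrier →L[K] (Xs n₀).carrier :=
  (iterateRetraction r (n₀.le_add_right n)).comp (iterateBonding b (n.le_add_left n₀))

theorem norm_descend_le (hb : ∀ n, ‖b n‖ ≤ 1) (hr : ∀ n, ‖r n‖ ≤ 1) (n₀ n : ℕ) :
    ‖descend b r n₀ n‖ ≤ 1 :=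
  ContinuousLinearMap.norm_comp_le_one (norm_iterateRetraction_le r hr _)
    (norm_iterateBonding_le b hb _)

variable {b r}

theorem descend_comp_bonding (hrb : ∀ n x, r n (b n x) = x) (n₀ n : ℕ) :
    (descend b r n₀ (n + 1)).comp (b n) = descend b r n₀ n := by
  rw [descend, ContinuousLinearMap.comp_assoc, iterateBonding_comp_bonding b _ (by omega),
    iterateRetraction_comp_iterateBonding_succ hrb (n.le_add_left n₀) (n₀.le_add_right n)]
  rfl

theorem descend_self (hrb : ∀ n x, r n (b n x) = x) (n₀ : ℕ) (x : (Xs n₀).carrier) :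
    descend b r n₀ n₀ x = x := by
  rw [descend, iterateRetraction_comp_iterateBonding hrb]
  rfl

end NSpace

open NSpace in
theorem dirLimit_embedding_isSection (Xs : ℕ → NSpace 𝕜)
    (b : ∀ n : ℕ, (Xs n).carrier →L[𝕜] (Xs (n + 1)).carrier)
    (hb : ∀ n, Isometry (b n))
    (hsec : ∀ n : ℕ, ∃ r : (Xs (n + 1)).carrier →L[𝕜] (Xs n).carrier,
      ‖r‖ ≤ 1 ∧ ∀ x, r (b n x) = x)
    (L : Type u) [NormedAddCommGroup L] [NormedSpace 𝕜 L]
    (i : ∀ n : ℕ, (Xs n).carrier →L[𝕜] L)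
    (hlim : IsDirLimit 𝕜 Xs b L i) :
    ∀ n₀ : ℕ, ∃ r : L →L[𝕜] (Xs n₀).carrier, ‖r‖ ≤ 1 ∧ ∀ x, r (i n₀ x) = x := by
  choose r hr hrb using hsec
  intro n₀
  have hb' : ∀ n, ‖b n‖ ≤ 1 := fun n => (b n).norm_le_one_of_isometry (hb n)
  obtain ⟨⟨F, hF, -⟩, hF_norm⟩ :=
    hlim.2.2 _ (descend b r n₀) (norm_descend_le b r hb' hr n₀)
      fun n => DFunLike.congr_fun (descend_comp_bonding hrb n₀ n)
  exact ⟨F, hF_norm F hF, fun x => (hF n₀ x).trans (descend_self hrb n₀ x)⟩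
end

section
/- No parareflexive non-reflexive space embeds isometrically into a reflexive space: let X be a normed space over 𝕜 which is parareflexive but not reflexive (the canonical embedding j_X : X → D²(X) is not surjective), and let Y be a reflexive Banach space over 𝕜. Then there exists no linear isometry from X into Y. -/
/-!
STATEMENT 19: No parareflexive non-reflexive space embeds isometrically into a reflexive
space: if `X` is parareflexive but the canonical embedding `j_X : X → D²(X)` is not
surjective, and `Y` is a reflexive Banach space, then there is no linear isometry `X → Y`.
-/

open NormedSpace

universe u

variable (𝕜 : Type u) [RCLike 𝕜]

theorem no_isometry_of_parareflexive_nonreflexive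
    (X : Type u) [NormedAddCommGroup X] [NormedSpace 𝕜 X]
    (Y : Type u) [NormedAddCommGroup Y] [NormedSpace 𝕜 Y] [CompleteSpace Y]
    (hpara : Nonempty (X ≃ₗᵢ[𝕜] StrongDual 𝕜 (StrongDual 𝕜 X)))
    (hX : ¬ Function.Surjective (inclusionInDoubleDual 𝕜 X))
    (hY : Function.Surjective (inclusionInDoubleDual 𝕜 Y)) :
    ¬ ∃ f : X →L[𝕜] Y, Isometry f := by
  rintro ⟨f, hf⟩
  obtain ⟨e⟩ := hpara
  -- X is complete since it is isometric to a dual space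
  haveI : CompleteSpace X := e.toIsometryEquiv.completeSpace
  apply hX
  intro F
  -- `f` as a linear isometry
  have hnorm : ∀ x, ‖f x‖ = ‖x‖ := fun x => hf.norm_map_of_map_zero (map_zero f) x
  set L : X →ₗᵢ[𝕜] Y := ⟨f.toLinearMap, hnorm⟩ with hL
  have hLapp : ∀ x, L x = f x := fun x => rfl
  -- the range of f, a closed submodule of Y
  set N : Submodule 𝕜 Y := LinearMap.range L.toLinearMap with hN
  have hNclosed : IsClosed (N : Set Y) := by
    have : (N : Set Y) = Set.range f := by
      ext y; simp [hN, LinearMap.mem_range, Set.mem_range, hLapp]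
    rw [this]
    exact hf.isClosedEmbedding.isClosed_range
  -- the "double adjoint" image of F in D²(Y)
  set T : StrongDual 𝕜 Y →L[𝕜] StrongDual 𝕜 X := (ContinuousLinearMap.compL 𝕜 X Y 𝕜).flip f with hT
  have hTapp : ∀ (ψ : StrongDual 𝕜 Y) (x : X), T ψ x = ψ (f x) := fun ψ x => rfl
  set G : StrongDual 𝕜 (StrongDual 𝕜 Y) := F.comp T with hG
  obtain ⟨y, hy⟩ := hY G
  have hyG : ∀ ψ : StrongDual 𝕜 Y, ψ y = G ψ := fun ψ => by
    rw [← hy]; rfl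
  -- Step 1: y ∈ N
  have hyN : y ∈ N := by
    by_contra hyn
    haveI := hNclosed
    -- pass to the quotient Y ⧸ N
    have hmk0 : (Submodule.Quotient.mk y : Y ⧸ N) ≠ 0 := by
      rwa [ne_eq, Submodule.Quotient.mk_eq_zero]
    obtain ⟨g, -, hg⟩ := exists_dual_vector 𝕜 (Submodule.Quotient.mk y : Y ⧸ N) (norm_ne_zero_iff.mpr hmk0)
    -- the quotient map as a continuous linear map
    set π : Y →L[𝕜] Y ⧸ N :=
      N.mkQ.mkContinuous 1 (fun z => by
        simpa using Submodule.Quotient.norm_mk_le N z) with hπ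
    have hπapp : ∀ z : Y, π z = Submodule.Quotient.mk z := fun z => rfl
    set ψ : StrongDual 𝕜 Y := g.comp π with hψ
    have hψy : ψ y = ‖(Submodule.Quotient.mk y : Y ⧸ N)‖ := by
      simp [hψ, hπapp, hg]
    have hψ0 : T ψ = 0 := by
      ext x
      have hfx : Submodule.Quotient.mk (f x) = (0 : Y ⧸ N) := by
        rw [Submodule.Quotient.mk_eq_zero]
        exact ⟨x, rfl⟩
      simp [hTapp, hψ, hπapp, hfx]
    have h1 : ψ y = 0 := by
      rw [hyG, hG, ContinuousLinearMap.comp_apply, hψ0, map_zero]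
    rw [hψy] at h1
    exact hmk0 (norm_eq_zero.mp (by exact_mod_cast h1))
  obtain ⟨x, hx⟩ := hyN
  have hx' : f x = y := hx
  refine ⟨x, ?_⟩
  ext φ
  -- extend φ ∘ L.equivRange.symm from N to Y
  set e' : X ≃ₗᵢ[𝕜] N := L.equivRange with he'
  set μ : N →L[𝕜] 𝕜 := φ.comp (e'.symm : N →L[𝕜] X) with hμ
  obtain ⟨ψ, hψext, -⟩ := exists_extension_norm_eq (N : Submodule 𝕜 Y) μ
  have hψf : ∀ z : X, ψ (f z) = φ z := by
    intro z
    have hz : f z ∈ N := ⟨z, rfl⟩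
    have : ψ (f z) = μ ⟨f z, hz⟩ := hψext ⟨f z, hz⟩
    rw [this]
    have he'z : e' z = ⟨f z, hz⟩ := by
      apply Subtype.ext; rfl
    simp [hμ, ← he'z]
  have hTψ : T ψ = φ := by
    ext z; rw [hTapp]; exact hψf z
  have : φ x = ψ y := by rw [← hx', hψf]
  calc inclusionInDoubleDual 𝕜 X x φ = φ x := rfl
    _ = ψ y := this
    _ = G ψ := hyG ψ
    _ = F (T ψ) := rfl
    _ = F φ := by rw [hTψ]
end
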